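/- arXiv:2601.07114 — 2 statements merged into one kernel-verified Lean document; each statement's English description precedes it below -/
import Mathlib

section
/- Let τ_c > τ_f > 0, l > 0, v_f > 0 be reals and set q_max = 1/(τ_f + l/v_f). Then there is no assignment of reals C, r_1, g_1, r_2, g_2 ≥ 0, positive integers L_1, L_2, reals T_1, T_2 ≥ 0, and reals τ̲, τ̄ ≥ τ_c satisfying simultaneously: C = r_i + g_i and L_i = q_max·g_i and q_max·(r_i + g_i) − L_i = 0 and T_i = (L_i − 1)·τ_f + L_i·(l/v_f) for i = 1,2, together with C = τ̲ + τ̄ + T_1 + T_2. That is, model M1 is infeasible when two movements sharing one conflict point both arrive at the saturation flow rate q_max. -/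
/-!
At the saturation rate `1 / (τf + l / vf)` a platoon that clears within the cycle fills the
whole cycle: `C = L (τf + l / vf)`, so its occupancy time is `C - τf`. The cycle equation
then reads `C = τlo + τhi + 2 (C - τf)`, i.e. `C = 2 τf - τlo - τhi < 0`, although `C = r + g ≥ 0`.
-/

lemma cycle_eq_of_one_div_mul_eq {h C L : ℝ} (hL : L ≠ 0) (hq : 1 / h * C = L) :
    C = L * h := by
  have hh : h ≠ 0 := by
    rintro rfl
    simp_all
  rw [← hq]
  field_simp

lemma occupancy_eq_cycle_sub {τ s C L : ℝ} (hL : L ≠ 0) (hq : 1 / (τ + s) * C = L) :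
    (L - 1) * τ + L * s = C - τ := by
  rw [cycle_eq_of_one_div_mul_eq hL hq]
  ring

theorem stmt_2_general (τc τf l vf : ℝ)
    (hτ : τf < τc) :
    ¬ ∃ (C r₁ g₁ r₂ g₂ : ℝ) (L₁ L₂ : ℕ) (T₁ T₂ τlo τhi : ℝ),
      0 ≤ r₁ ∧ 0 ≤ g₁ ∧ 0 ≤ r₂ ∧ 0 ≤ g₂ ∧
      0 < L₁ ∧ 0 < L₂ ∧ 0 ≤ T₁ ∧ 0 ≤ T₂ ∧
      τc ≤ τlo ∧ τc ≤ τhi ∧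
      C = r₁ + g₁ ∧ C = r₂ + g₂ ∧
      (L₁ : ℝ) = (1 / (τf + l / vf)) * g₁ ∧
      (L₂ : ℝ) = (1 / (τf + l / vf)) * g₂ ∧
      (1 / (τf + l / vf)) * (r₁ + g₁) - (L₁ : ℝ) = 0 ∧
      (1 / (τf + l / vf)) * (r₂ + g₂) - (L₂ : ℝ) = 0 ∧
      T₁ = ((L₁ : ℝ) - 1) * τf + (L₁ : ℝ) * (l / vf) ∧
      T₂ = ((L₂ : ℝ) - 1) * τf + (L₂ : ℝ) * (l / vf) ∧
      C = τlo + τhi + T₁ + T₂ := by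
  rintro ⟨C, r₁, g₁, r₂, g₂, L₁, L₂, T₁, T₂, τlo, τhi, hr₁, hg₁, -, -, hL₁, hL₂, -, -,
    hlo, hhi, hC₁, hC₂, -, -, hq₁, hq₂, hT₁, hT₂, hcycle⟩
  have hT₁C : T₁ = C - τf := by
    rw [hT₁]
    exact occupancy_eq_cycle_sub (by positivity) (by rw [hC₁]; linarith)
  have hT₂C : T₂ = C - τf := by
    rw [hT₂]
    exact occupancy_eq_cycle_sub (by positivity) (by rw [hC₂]; linarith)
  linarith

/-- Model M1 is infeasible when two movements sharing a single conflict point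
both arrive at the saturation flow rate `qmax = 1 / (τf + l / vf)`: no choice
of cycle `C`, red/green times, positive-integer platoon sizes, occupancy times,
and departure–arrival headways `≥ τc` can satisfy all constraints. -/
theorem stmt_2 (τc τf l vf : ℝ)
    (hτf : 0 < τf) (hτ : τf < τc) (hl : 0 < l) (hvf : 0 < vf) :
    ¬ ∃ (C r₁ g₁ r₂ g₂ : ℝ) (L₁ L₂ : ℕ) (T₁ T₂ τlo τhi : ℝ),
      0 ≤ r₁ ∧ 0 ≤ g₁ ∧ 0 ≤ r₂ ∧ 0 ≤ g₂ ∧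
      0 < L₁ ∧ 0 < L₂ ∧ 0 ≤ T₁ ∧ 0 ≤ T₂ ∧
      τc ≤ τlo ∧ τc ≤ τhi ∧
      C = r₁ + g₁ ∧ C = r₂ + g₂ ∧
      (L₁ : ℝ) = (1 / (τf + l / vf)) * g₁ ∧
      (L₂ : ℝ) = (1 / (τf + l / vf)) * g₂ ∧
      (1 / (τf + l / vf)) * (r₁ + g₁) - (L₁ : ℝ) = 0 ∧
      (1 / (τf + l / vf)) * (r₂ + g₂) - (L₂ : ℝ) = 0 ∧
      T₁ = ((L₁ : ℝ) - 1) * τf + (L₁ : ℝ) * (l / vf) ∧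
      T₂ = ((L₂ : ℝ) - 1) * τf + (L₂ : ℝ) * (l / vf) ∧
      C = τlo + τhi + T₁ + T₂ :=
  stmt_2_general τc τf l vf hτ
end

section
/- Let P be a finite nonempty set of movements equipped with a linear order, N a finite set of conflict points, and for each n ∈ N let p_1(n) ≺ p_2(n) be the two distinct movements sharing n. Let t_travel(p,n) ≥ 0 be travel times, q_p > 0 flow rates, and τ_c ≥ τ_f > 0, l > 0, v_f > 0 reals; set q_max = 1/(τ_f + l/v_f) and suppose C̄ ≥ max{2τ_c + 2l/v_f, max_p 1/q_p}. Assume there exists an offset function t_off : P → [0,∞) satisfying, for every n ∈ N, t_off(p_2(n)) − t_off(p_1(n)) = l/v_f + τ_c + t_travel(p_1(n),n) − t_travel(p_2(n),n). Then the assignment C = max{2τ_c + 2l/v_f, max_p 1/q_p}, g_p = 1/q_max, r_p = C − g_p, L_p = 1, T_p = l/v_f, t_arr(p,n) = t_off(p) + r_p + t_travel(p,n), τ̲_n = τ_c, τ̄_n = C − 2l/v_f − τ_c (with the movement on p_1(n) sequenced first at each n) is feasible for model M2; that is: C = τ̲_n + τ̄_n + T_{p_1(n)} + T_{p_2(n)}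 for all n; C = r_p + g_p, T_p = (L_p − 1)τ_f + L_p·l/v_f, r_p ≥ 0, g_p ≥ 0 for all p; τ̲_n = t_arr(p_2(n),n) − t_arr(p_1(n),n) − T_{p_1(n)} for all n; t_arr(p,n) ≥ 0; τ̲_n ≥ τ_c and τ̄_n ≥ τ_c for all n; and 0 < C ≤ C̄. -/
/-- Feasibility construction for model M2 (Proposition 2 of the paper).
Given movements `P` (finite, nonempty, linearly ordered) and conflict points `N`,
each shared by the two distinct movements `p₁ n ≺ p₂ n`, nonnegative travel
times, positive flow rates, headways `τc ≥ τf > 0`, vehicle length `l > 0`,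
free-flow speed `vf > 0`, saturation rate `qmax = 1 / (τf + l / vf)`, and
`C̄ ≥ max {2τc + 2l/vf, max_p 1/q_p}`, if offsets `t_off ≥ 0` satisfy the
difference equations (16), then the stated assignment is feasible for M2. -/
theorem stmt_3 {P N : Type*} [Fintype P] [Nonempty P] [LinearOrder P] [Fintype N]
    (p₁ p₂ : N → P) (hp : ∀ n, p₁ n < p₂ n)
    (ttravel : P → N → ℝ) (httravel : ∀ p n, 0 ≤ ttravel p n)
    (q : P → ℝ) (hq : ∀ p, 0 < q p)
    (τc τf l vf qmax Cbar : ℝ)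
    (hτf : 0 < τf) (hτ : τf ≤ τc) (hl : 0 < l) (hvf : 0 < vf)
    (hqmax : qmax = 1 / (τf + l / vf))
    (hCbar : max (2 * τc + 2 * (l / vf))
        (Finset.univ.sup' Finset.univ_nonempty (fun p => 1 / q p)) ≤ Cbar)
    (toff : P → ℝ) (htoff0 : ∀ p, 0 ≤ toff p)
    (htoff : ∀ n, toff (p₂ n) - toff (p₁ n)
        = l / vf + τc + ttravel (p₁ n) n - ttravel (p₂ n) n) :
    let C : ℝ := max (2 * τc + 2 * (l / vf))
        (Finset.univ.sup' Finset.univ_nonempty (fun p => 1 / q p));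
    let g : ℝ := 1 / qmax;
    let r : ℝ := C - g;
    let L : ℕ := 1;
    let T : ℝ := l / vf;
    let tarr : P → N → ℝ := fun p n => toff p + r + ttravel p n;
    let τlo : ℝ := τc;
    let τhi : ℝ := C - 2 * (l / vf) - τc;
    -- cycle structure at every conflict point
    (∀ _n : N, C = τlo + τhi + T + T) ∧
    -- cycle, occupancy and sign constraints for every movement
    (C = r + g) ∧
    (T = ((L : ℝ) - 1) * τf + (L : ℝ) * (l / vf)) ∧
    (0 ≤ r) ∧ (0 ≤ g) ∧
    -- headway linking (movement p₁ n sequenced first at every n)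
    (∀ n : N, τlo = tarr (p₂ n) n - tarr (p₁ n) n - T) ∧
    -- nonnegative arrival times
    (∀ (p : P) (n : N), 0 ≤ tarr p n) ∧
    -- safety headway bounds
    (τc ≤ τlo) ∧ (τc ≤ τhi) ∧
    -- cycle-length bounds
    (0 < C ∧ C ≤ Cbar) := by
  intro C g r L T tarr τlo τhi
  have hlv : 0 < l / vf := div_pos hl hvf
  have hτc : 0 < τc := lt_of_lt_of_le hτf hτ
  have hCge : 2 * τc + 2 * (l / vf) ≤ C := le_max_left _ _
  have hCpos : 0 < C := lt_of_lt_of_le (by positivity) hCge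
  have hg : g = τf + l / vf := by
    simp only [g, hqmax, one_div, inv_inv]
  have hr : 0 ≤ r := by
    have : τf + l / vf ≤ C := by nlinarith
    simp only [r, hg]; linarith
  refine ⟨fun _ => by simp only [τlo, τhi, T]; ring, by simp only [r]; ring,
    by simp only [T, L]; push_cast; ring, hr, by rw [hg]; positivity,
    fun n => ?_, fun p n => by have := htoff0 p; have := httravel p n; simp only [tarr]; linarith,
    le_refl _, by simp only [τhi]; linarith, hCpos, hCbar⟩
  have := htoff n
  simp only [tarr, τlo, T]
  linarith
end
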